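/- Let R be a commutative ring, I an ideal of R, M an R-module, P an I-primary submodule of M, and F a flat R-module such that F ⊗ P ≠ F ⊗ M (where F ⊗ P is identified with its image in F ⊗ M). Then F ⊗ P is an I-primary submodule of the R-module F ⊗ M. -/

import Mathlib

open TensorProduct

/-- `P` is an `I`-primary submodule of `M`. -/
def IsIPrimary {R : Type*} [CommRing R] {M : Type*} [AddCommGroup M] [Module R M]
    (I : Ideal R) (P : Submodule R M) : Prop :=
  P ≠ ⊤ ∧ ∀ r : R, ∀ m : M, r • m ∈ P → r • m ∉ I • P →
    m ∈ P ∨ r ∈ (P.colon ⊤).radical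

/-- The image of `F ⊗ N` in `F ⊗ M`, under the map induced by the inclusion `N → M`. -/
noncomputable def tensorImage {R : Type*} [CommRing R] {M : Type*} [AddCommGroup M] [Module R M]
    (F : Type*) [AddCommGroup F] [Module R F] (N : Submodule R M) :
    Submodule R (F ⊗[R] M) :=
  LinearMap.range (LinearMap.lTensor F N.subtype)

/-! Suppose `r • x ∈ F ⊗ P`, `r • x ∉ I • (F ⊗ P)` and `r ∉ √(P : M)`. Since `P` is `I`-primary,
the submodule `K = {m | r • m ∈ P}` is covered by `P` and `{m | r • m ∈ I • P}`, and a submodule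
covered by two submodules lies in one of them. As `F` is flat, `F ⊗ -` commutes with preimages,
so `x ∈ F ⊗ K`. Hence either `x ∈ F ⊗ P`, or `r • x ∈ F ⊗ (I • P) ⊆ I • (F ⊗ P)`, which is
excluded. The case `r ∈ √(P : M)` is immediate since `(P : M) ⊆ (F ⊗ P : F ⊗ M)`. -/

section TensorImage

variable {R : Type*} [CommRing R] {M M' : Type*} [AddCommGroup M] [Module R M]
  [AddCommGroup M'] [Module R M'] (F : Type*) [AddCommGroup F] [Module R F]

theorem tensorImage_mono {N N' : Submodule R M} (h : N ≤ N') :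
    tensorImage F N ≤ tensorImage F N' := by
  rw [tensorImage, tensorImage, ← Submodule.subtype_comp_inclusion N N' h,
    LinearMap.lTensor_comp]
  exact LinearMap.range_comp_le_range _ _

theorem tensorImage_ideal_smul_le (I : Ideal R) (N : Submodule R M) :
    tensorImage F (I • N) ≤ I • tensorImage F N := by
  rintro _ ⟨y, rfl⟩
  induction y using TensorProduct.induction_on with
  | zero => simp
  | tmul f m =>
    obtain ⟨m, hm⟩ := m
    change f ⊗ₜ[R] m ∈ I • tensorImage F N
    refine Submodule.smul_induction_on hm (fun i hi n hn => ?_) (fun m m' hm hm' => ?_)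
    · rw [tmul_smul]
      exact Submodule.smul_mem_smul hi ⟨f ⊗ₜ ⟨n, hn⟩, rfl⟩
    · rw [tmul_add]
      exact add_mem hm hm'
  | add y z hy hz =>
    rw [map_add]
    exact add_mem hy hz

theorem tensorImage_top : tensorImage F (⊤ : Submodule R M) = ⊤ :=
  LinearMap.range_eq_top.mpr <| LinearMap.lTensor_surjective F fun m => ⟨⟨m, trivial⟩, rfl⟩

theorem map_lTensor_tensorImage (f : M →ₗ[R] M') (N : Submodule R M) :
    (tensorImage F N).map (f.lTensor F) = tensorImage F (N.map f) := by
  rw [tensorImage, tensorImage, ← LinearMap.range_comp, ← LinearMap.lTensor_comp,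
    LinearMap.lTensor_range, LinearMap.range_comp, Submodule.range_subtype]

theorem tensorImage_comap_le (f : M →ₗ[R] M') (N' : Submodule R M') :
    tensorImage F (N'.comap f) ≤ (tensorImage F N').comap (f.lTensor F) := by
  rw [← Submodule.map_le_iff_le_comap, map_lTensor_tensorImage]
  exact tensorImage_mono F (Submodule.map_comap_le f N')

theorem smul_mem_tensorImage {r : R} {N N' : Submodule R M}
    (h : N ≤ N'.comap (r • LinearMap.id)) {x : F ⊗[R] M} (hx : x ∈ tensorImage F N) :
    r • x ∈ tensorImage F N' := by
  have := tensorImage_comap_le F _ N' (tensorImage_mono F h hx)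
  rwa [Submodule.mem_comap, LinearMap.lTensor_smul, LinearMap.lTensor_id] at this

theorem colon_top_le_colon_top_tensorImage (N : Submodule R M) :
    N.colon ⊤ ≤ (tensorImage F N).colon ⊤ := by
  intro r hr
  rw [Submodule.mem_colon] at hr ⊢
  intro x _
  refine smul_mem_tensorImage F (N := ⊤) (fun m _ => hr m trivial) ?_
  rw [tensorImage_top]
  trivial

theorem tensorImage_ker [Module.Flat R F] (f : M →ₗ[R] M') :
    tensorImage F (LinearMap.ker f) = LinearMap.ker (f.lTensor F) :=
  (LinearMap.exact_iff.mp
    (Module.Flat.lTensor_exact F (LinearMap.exact_subtype_ker_map f))).symm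

theorem tensorImage_comap [Module.Flat R F] (f : M →ₗ[R] M') (N' : Submodule R M') :
    tensorImage F (N'.comap f) = (tensorImage F N').comap (f.lTensor F) := by
  rw [← N'.ker_mkQ, ← LinearMap.ker_comp, tensorImage_ker, tensorImage_ker,
    LinearMap.lTensor_comp, LinearMap.ker_comp]

theorem mem_tensorImage_comap_smul_iff [Module.Flat R F] {r : R} {N : Submodule R M}
    {x : F ⊗[R] M} :
    x ∈ tensorImage F (N.comap (r • LinearMap.id)) ↔ r • x ∈ tensorImage F N := by
  rw [tensorImage_comap, Submodule.mem_comap, LinearMap.lTensor_smul, LinearMap.lTensor_id]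
  rfl

end TensorImage

theorem IsIPrimary.comap_smul_le_or {R : Type*} [CommRing R] {M : Type*} [AddCommGroup M]
    [Module R M] {I : Ideal R} {P : Submodule R M} (hP : IsIPrimary I P) {r : R}
    (hr : r ∉ (P.colon ⊤).radical) :
    P.comap (r • LinearMap.id) ≤ P ∨
      P.comap (r • LinearMap.id) ≤ (I • P).comap (r • LinearMap.id) := by
  refine AddSubgroupClass.subset_union.mp fun m hm => ?_
  by_cases hrm : r • m ∈ I • P
  · exact Or.inr hrm
  · exact Or.inl ((hP.2 r m hm hrm).resolve_right hr)

theorem stmt17 {R : Type*} [CommRing R] {M : Type*} [AddCommGroup M] [Module R M]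
    (F : Type*) [AddCommGroup F] [Module R F] [Module.Flat R F]
    (I : Ideal R) (P : Submodule R M)
    (hP : IsIPrimary I P)
    (hproper : tensorImage F P ≠ ⊤) :
    IsIPrimary I (tensorImage F P) := by
  refine ⟨hproper, fun r x hx hnx => ?_⟩
  by_cases hr : r ∈ (P.colon ⊤).radical
  · exact Or.inr (Ideal.radical_mono (colon_top_le_colon_top_tensorImage F P) hr)
  have hxK : x ∈ tensorImage F (P.comap (r • LinearMap.id)) :=
    mem_tensorImage_comap_smul_iff F |>.mpr hx
  rcases hP.comap_smul_le_or hr with hK | hK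
  · exact Or.inl (tensorImage_mono F hK hxK)
  · exact absurd (tensorImage_ideal_smul_le F I P (smul_mem_tensorImage F hK hxK)) hnx
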